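/- Let α ∈ (0,1) and let X be an ℕ-valued random variable satisfying the recursive distributional equation. Then p = P(X = 0) ≥ 1 − α. -/

import Mathlib

open scoped ENNReal

/-- The Poisson(α) probability mass function on ℕ. -/
noncomputable def poissonPMF (α : ℝ) (k : ℕ) : ℝ≥0∞ :=
  ENNReal.ofReal (Real.exp (-α) * α ^ k / (Nat.factorial k))

/-- The Geometric(1/2) pmf: P(N = k) = (1/2)^(k+1) for k ≥ 0. -/
noncomputable def geomHalf (k : ℕ) : ℝ≥0∞ := (1 / 2) ^ (k + 1)

/-- The law of (X - 1)⁺ when X has law μ on ℕ. -/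
noncomputable def shiftLaw (μ : ℕ → ℝ≥0∞) (k : ℕ) : ℝ≥0∞ :=
  if k = 0 then μ 0 + μ 1 else μ (k + 1)

/-- Convolution of two (sub-)pmfs on ℕ: the law of an independent sum. -/
noncomputable def convAdd (f g : ℕ → ℝ≥0∞) (k : ℕ) : ℝ≥0∞ :=
  ∑ j ∈ Finset.range (k + 1), f j * g (k - j)

/-- n-fold convolution of a pmf on ℕ: the law of a sum of n i.i.d. copies. -/
noncomputable def iterConv (f : ℕ → ℝ≥0∞) : ℕ → ℕ → ℝ≥0∞
  | 0 => fun k => if k = 0 then 1 else 0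
  | n + 1 => convAdd (iterConv f n) f

/-- μ is the law of an ℕ-valued random variable X satisfying the RDE
    X =_d P + ∑_{i=1}^N (X_i - 1)⁺, with P ~ Poisson(α), N ~ Geom(1/2),
    X_i i.i.d. with law μ, all independent. -/
def SatisfiesRDE (α : ℝ) (μ : ℕ → ℝ≥0∞) : Prop :=
  (∑' k, μ k) = 1 ∧
  ∀ k, μ k = ∑' n, geomHalf n * convAdd (poissonPMF α) (iterConv (shiftLaw μ) n) k

/-- The probability generating function G(s) = E[s^X]. -/
noncomputable def pgf (μ : ℕ → ℝ≥0∞) (s : ℝ) : ℝ := ∑' k, (μ k).toReal * s ^ k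

/-- The mean E[X] = ∑ k · P(X = k), valued in [0,∞]. -/
noncomputable def meanENN (μ : ℕ → ℝ≥0∞) : ℝ≥0∞ := ∑' k : ℕ, (k : ℝ≥0∞) * μ k

/-! With `G` the pgf of `X` and `H` that of `(X - 1)⁺`, the equation reads
`G(s) (2 - H(s)) = e^{α(s-1)}`, and `s H(s) + p = G(s) + p s`. Eliminating `H` and using
`G (2 - G) ≤ 1` and `e^{α(s-1)} ≥ 1 + α(s-1)` gives `G(s) (2 - p) ≤ 1 + α s` for `0 < s < 1`.
Letting `s → 1⁻`, Abel's theorem gives `G(s) → 1`, hence `2 - p ≤ 1 + α`. -/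

open Filter Topology

-- In `ℝ≥0∞` every series converges, so the generating-function identities need no side conditions.
noncomputable def genFun (f : ℕ → ℝ≥0∞) (x : ℝ≥0∞) : ℝ≥0∞ := ∑' k, f k * x ^ k

theorem ENNReal.tsum_mul_tsum_eq_tsum_sum_range (f g : ℕ → ℝ≥0∞) :
    (∑' n, f n) * ∑' n, g n = ∑' n, ∑ k ∈ Finset.range (n + 1), f k * g (n - k) := by
  simp_rw [← Finset.Nat.sum_antidiagonal_eq_sum_range_succ fun k l => f k * g l,
    ← ENNReal.tsum_mul_right, ← ENNReal.tsum_mul_left, ← ENNReal.tsum_prod,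
    ← Finset.HasAntidiagonal.sigmaAntidiagonalEquivProd.tsum_eq (fun p : ℕ × ℕ => f p.1 * g p.2),
    ENNReal.tsum_sigma', ← Finset.tsum_subtype]
  rfl

theorem genFun_convAdd (f g : ℕ → ℝ≥0∞) (x : ℝ≥0∞) :
    genFun (convAdd f g) x = genFun f x * genFun g x := by
  rw [genFun, genFun, genFun, ENNReal.tsum_mul_tsum_eq_tsum_sum_range]
  refine tsum_congr fun k => ?_
  rw [convAdd, Finset.sum_mul]
  refine Finset.sum_congr rfl fun j hj => ?_
  rw [← pow_mul_pow_sub x (Nat.lt_succ_iff.1 (Finset.mem_range.1 hj))]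
  ring

theorem genFun_iterConv (f : ℕ → ℝ≥0∞) (x : ℝ≥0∞) (n : ℕ) :
    genFun (iterConv f n) x = genFun f x ^ n := by
  induction n with
  | zero => simp [genFun, iterConv, tsum_ite_eq]
  | succ n ih => rw [iterConv, genFun_convAdd, ih, pow_succ]

theorem hasSum_poisson_mul_pow (α s : ℝ) :
    HasSum (fun k : ℕ => Real.exp (-α) * α ^ k / k.factorial * s ^ k)
      (Real.exp (α * (s - 1))) := by
  have h := (NormedSpace.expSeries_div_hasSum_exp (α * s)).mul_left (Real.exp (-α))
  rw [← Real.exp_eq_exp_ℝ, ← Real.exp_add] at h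
  convert h using 2 with k
  · rfl
  · ring
  · ring

theorem genFun_poissonPMF {α s : ℝ} (hα : 0 ≤ α) (hs : 0 ≤ s) :
    genFun (poissonPMF α) (ENNReal.ofReal s) = ENNReal.ofReal (Real.exp (α * (s - 1))) := by
  have hterm (k : ℕ) : poissonPMF α k * ENNReal.ofReal s ^ k
      = ENNReal.ofReal (Real.exp (-α) * α ^ k / k.factorial * s ^ k) := by
    rw [poissonPMF, ← ENNReal.ofReal_pow hs, ← ENNReal.ofReal_mul (by positivity)]
  simp_rw [genFun, hterm]
  rw [← ENNReal.ofReal_tsum_of_nonneg (fun k => by positivity)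
    (hasSum_poisson_mul_pow α s).summable, (hasSum_poisson_mul_pow α s).tsum_eq]

theorem tsum_geomHalf_mul_pow (y : ℝ≥0∞) : ∑' n, geomHalf n * y ^ n = (2 - y)⁻¹ := by
  have hterm (n : ℕ) : geomHalf n * y ^ n = 2⁻¹ * (y * 2⁻¹) ^ n := by
    rw [geomHalf, pow_succ, mul_pow, one_div]; ring
  simp_rw [hterm]
  rw [ENNReal.tsum_mul_left, ENNReal.tsum_geometric, ← ENNReal.mul_inv (by simp) (by simp),
    ENNReal.mul_sub (by simp), mul_one, mul_comm y, ← mul_assoc,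
    ENNReal.mul_inv_cancel (by simp) (by simp), one_mul]

theorem genFun_shiftLaw (μ : ℕ → ℝ≥0∞) (x : ℝ≥0∞) :
    x * genFun (shiftLaw μ) x + μ 0 = genFun μ x + μ 0 * x := by
  have hμ : genFun μ x = μ 0 + (μ 1 * x + ∑' k, μ (k + 2) * x ^ (k + 2)) := by
    rw [genFun, tsum_eq_zero_add' ENNReal.summable, tsum_eq_zero_add' ENNReal.summable]
    simp
  have hshift :
      x * genFun (shiftLaw μ) x = x * (μ 0 + μ 1) + ∑' k, μ (k + 2) * x ^ (k + 2) := by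
    rw [genFun, ← ENNReal.tsum_mul_left, tsum_eq_zero_add' ENNReal.summable]
    congr 1
    · simp [shiftLaw]
    · refine tsum_congr fun k => ?_
      simp only [shiftLaw, Nat.add_one_ne_zero, if_false]
      ring
  rw [hμ, hshift]
  ring

theorem tsum_shiftLaw {μ : ℕ → ℝ≥0∞} (h0 : μ 0 ≠ ⊤) : ∑' k, shiftLaw μ k = ∑' k, μ k := by
  have h := genFun_shiftLaw μ 1
  simp only [genFun, one_pow, mul_one, one_mul] at h
  exact (ENNReal.add_left_inj h0).1 h

theorem genFun_le_tsum (f : ℕ → ℝ≥0∞) {x : ℝ≥0∞} (hx : x ≤ 1) : genFun f x ≤ ∑' k, f k :=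
  ENNReal.tsum_le_tsum fun _ => mul_le_of_le_one_right' (pow_le_one₀ zero_le hx)

theorem SatisfiesRDE.genFun_eq {α : ℝ} {μ : ℕ → ℝ≥0∞} (hμ : SatisfiesRDE α μ) (x : ℝ≥0∞) :
    genFun μ x = genFun (poissonPMF α) x * (2 - genFun (shiftLaw μ) x)⁻¹ := by
  have hterm (k : ℕ) : μ k * x ^ k = ∑' n, geomHalf n *
      (convAdd (poissonPMF α) (iterConv (shiftLaw μ) n) k * x ^ k) := by
    rw [hμ.2 k, ← ENNReal.tsum_mul_right]
    simp_rw [mul_assoc]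
  rw [genFun, tsum_congr hterm, ENNReal.tsum_comm, ← tsum_geomHalf_mul_pow,
    ← ENNReal.tsum_mul_left]
  refine tsum_congr fun n => ?_
  rw [ENNReal.tsum_mul_left, ← genFun, genFun_convAdd, genFun_iterConv]
  ring

theorem toReal_genFun_ofReal {μ : ℕ → ℝ≥0∞} (hμ : ∑' k, μ k ≠ ⊤) {s : ℝ} (hs : 0 ≤ s) :
    (genFun μ (ENNReal.ofReal s)).toReal = pgf μ s := by
  have hfin (k : ℕ) : μ k * ENNReal.ofReal s ^ k ≠ ⊤ :=
    ENNReal.mul_ne_top (ENNReal.ne_top_of_tsum_ne_top hμ k) (by simp)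
  rw [genFun, ENNReal.tsum_toReal_eq hfin]
  simp [pgf, ENNReal.toReal_ofReal hs]

theorem pgf_shiftLaw {μ : ℕ → ℝ≥0∞} (hμ : ∑' k, μ k ≠ ⊤) {s : ℝ} (hs0 : 0 ≤ s) (hs1 : s ≤ 1) :
    s * pgf (shiftLaw μ) s + (μ 0).toReal = pgf μ s + (μ 0).toReal * s := by
  have hx : ENNReal.ofReal s ≤ 1 := ENNReal.ofReal_le_one.2 hs1
  have h0 : μ 0 ≠ ⊤ := ENNReal.ne_top_of_tsum_ne_top hμ 0
  have hshift : ∑' k, shiftLaw μ k ≠ ⊤ := by rwa [tsum_shiftLaw h0]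
  have hG : genFun μ (ENNReal.ofReal s) ≠ ⊤ := ne_top_of_le_ne_top hμ (genFun_le_tsum μ hx)
  have hH : genFun (shiftLaw μ) (ENNReal.ofReal s) ≠ ⊤ :=
    ne_top_of_le_ne_top hshift (genFun_le_tsum _ hx)
  have h := congrArg ENNReal.toReal (genFun_shiftLaw μ (ENNReal.ofReal s))
  rwa [ENNReal.toReal_add (by finiteness) h0, ENNReal.toReal_add hG (by finiteness),
    ENNReal.toReal_mul, ENNReal.toReal_mul, ENNReal.toReal_ofReal hs0,
    toReal_genFun_ofReal hshift hs0, toReal_genFun_ofReal hμ hs0] at h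

theorem SatisfiesRDE.pgf_mul_two_sub_pgf_shiftLaw {α : ℝ} (hα : 0 ≤ α) {μ : ℕ → ℝ≥0∞}
    (hμ : SatisfiesRDE α μ) {s : ℝ} (hs0 : 0 ≤ s) (hs1 : s ≤ 1) :
    pgf μ s * (2 - pgf (shiftLaw μ) s) = Real.exp (α * (s - 1)) := by
  have hx : ENNReal.ofReal s ≤ 1 := ENNReal.ofReal_le_one.2 hs1
  have hsum : ∑' k, μ k ≠ ⊤ := hμ.1 ▸ ENNReal.one_ne_top
  have hshift : ∑' k, shiftLaw μ k = 1 :=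
    (tsum_shiftLaw (ENNReal.ne_top_of_tsum_ne_top hsum 0)).trans hμ.1
  have hH : genFun (shiftLaw μ) (ENNReal.ofReal s) ≤ 1 := hshift ▸ genFun_le_tsum _ hx
  have hH' : pgf (shiftLaw μ) s ≤ 1 := by
    rw [← toReal_genFun_ofReal (hshift ▸ ENNReal.one_ne_top) hs0]
    exact ENNReal.toReal_le_of_le_ofReal zero_le_one (by simpa using hH)
  have h := congrArg ENNReal.toReal (hμ.genFun_eq (ENNReal.ofReal s))
  rw [genFun_poissonPMF hα hs0, ENNReal.toReal_mul, ENNReal.toReal_inv,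
    ENNReal.toReal_sub_of_le (hH.trans one_le_two) (by simp), ENNReal.toReal_ofNat,
    ENNReal.toReal_ofReal (by positivity), toReal_genFun_ofReal hsum hs0,
    toReal_genFun_ofReal (hshift ▸ ENNReal.one_ne_top) hs0] at h
  rw [h, mul_assoc, inv_mul_cancel₀ (by linarith), mul_one]

-- `(1 - s) g (2 - p) = g (2 - g) - s e` once `h` is eliminated.
theorem mul_two_sub_le_of_rde {g h p e α s : ℝ} (hs0 : 0 < s) (hs1 : s < 1)
    (hrde : g * (2 - h) = e) (hshift : s * h + p = g + p * s) (he : 1 + α * (s - 1) ≤ e) :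
    g * (2 - p) ≤ 1 + α * s := by
  have key : (1 - s) * (g * (2 - p)) ≤ (1 - s) * (1 + α * s) := by
    linear_combination sq_nonneg (1 - g) + mul_le_mul_of_nonneg_left he hs0.le
      - s * hrde - g * hshift
  exact le_of_mul_le_mul_left key (by linarith)

theorem tendsto_pgf_nhdsLT_one {μ : ℕ → ℝ≥0∞} (hμ : ∑' k, μ k = 1) :
    Tendsto (pgf μ) (𝓝[<] 1) (𝓝 1) := by
  have hsum : ∑' k, μ k ≠ ⊤ := hμ ▸ ENNReal.one_ne_top
  have h := ENNReal.hasSum_toReal hsum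
  rw [← ENNReal.tsum_toReal_eq (ENNReal.ne_top_of_tsum_ne_top hsum), hμ,
    ENNReal.toReal_one] at h
  exact Real.tendsto_tsum_powerSeries_nhdsWithin_lt h.tendsto_sum_nat

theorem prob_zero_ge_one_sub_alpha_general
    (α : ℝ) (hα0 : 0 < α)
    (μ : ℕ → ℝ≥0∞) (hμ : SatisfiesRDE α μ) :
    1 - α ≤ (μ 0).toReal := by
  have hsum : ∑' k, μ k ≠ ⊤ := hμ.1 ▸ ENNReal.one_ne_top
  have hbound : ∀ᶠ s in 𝓝[<] (1 : ℝ), pgf μ s * (2 - (μ 0).toReal) ≤ 1 + α * s := by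
    filter_upwards [Ioo_mem_nhdsLT one_pos] with s hs
    exact mul_two_sub_le_of_rde hs.1 hs.2 (hμ.pgf_mul_two_sub_pgf_shiftLaw hα0.le hs.1.le hs.2.le)
      (pgf_shiftLaw hsum hs.1.le hs.2.le) (by linarith [Real.add_one_le_exp (α * (s - 1))])
  have hlim : 1 * (2 - (μ 0).toReal) ≤ 1 + α * 1 :=
    le_of_tendsto_of_tendsto ((tendsto_pgf_nhdsLT_one hμ.1).mul_const _)
      ((continuous_const.add (continuous_const.mul continuous_id)).tendsto 1 |>.mono_left
        nhdsWithin_le_nhds) hbound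
  linarith

/-- For α ∈ (0,1), p = P(X = 0) ≥ 1 − α. -/
theorem prob_zero_ge_one_sub_alpha
    (α : ℝ) (hα0 : 0 < α) (hα1 : α < 1)
    (μ : ℕ → ℝ≥0∞) (hμ : SatisfiesRDE α μ) :
    1 - α ≤ (μ 0).toReal :=
  prob_zero_ge_one_sub_alpha_general α hα0 μ hμ
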